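/- A Gaussian distribution with positive definite precision matrix Θ that is an M-matrix has all partial correlation coefficients nonnegative: ρ_{ij|S} ≥ 0 for all distinct i,j and all S ⊆ [p]\{i,j}. -/

import Mathlib

/-!
Put `Σ = Θ⁻¹` and `M = S ∪ {i, j}`. By the Schur complement formula
`(Σ_MM)⁻¹ = Θ_MM - Θ_MMᶜ (Θ_MᶜMᶜ)⁻¹ Θ_MᶜM`. The block `Θ_MᶜMᶜ` is again a positive definite
Z-matrix, so its inverse is entrywise nonnegative; as the off-diagonal blocks of `Θ` are
nonpositive, the correction term is entrywise nonnegative and `(Σ_MM)⁻¹` is a Z-matrix.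
Hence the numerator `-((Σ_MM)⁻¹)_ij` of `ρ_{ij|S}` is nonnegative.
-/

noncomputable def partialCorr {p : ℕ} (Sg : Matrix (Fin p) (Fin p) ℝ)
    (i j : Fin p) (S : Finset (Fin p)) : ℝ :=
  let A := (Matrix.of fun a b : ↥(insert i (insert j S)) => Sg a.1 b.1)⁻¹;
  -(A ⟨i, Finset.mem_insert_self i _⟩
      ⟨j, Finset.mem_insert_of_mem (Finset.mem_insert_self j S)⟩) /
    Real.sqrt (A ⟨i, Finset.mem_insert_self i _⟩ ⟨i, Finset.mem_insert_self i _⟩ *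
      A ⟨j, Finset.mem_insert_of_mem (Finset.mem_insert_self j S)⟩
        ⟨j, Finset.mem_insert_of_mem (Finset.mem_insert_self j S)⟩)

namespace Matrix

variable {m n α : Type*}

theorem inv_toBlocks₁₁_inv [Fintype m] [Fintype n] [DecidableEq m] [DecidableEq n] [CommRing α]
    {M : Matrix (m ⊕ n) (m ⊕ n) α} (hM : IsUnit M) (hD : IsUnit M.toBlocks₂₂) :
    (M⁻¹.toBlocks₁₁)⁻¹ = M.toBlocks₁₁ - M.toBlocks₁₂ * M.toBlocks₂₂⁻¹ * M.toBlocks₂₁ := by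
  set N := M⁻¹
  have hMN : M * N = 1 := mul_nonsing_inv _ ((isUnit_iff_isUnit_det _).mp hM)
  rw [← fromBlocks_toBlocks M, ← fromBlocks_toBlocks N, fromBlocks_multiply,
    ← fromBlocks_one] at hMN
  obtain ⟨h₁₁, -, h₂₁, -⟩ := fromBlocks_inj.mp hMN
  have hD' : M.toBlocks₂₂⁻¹ * M.toBlocks₂₂ = 1 :=
    nonsing_inv_mul _ ((isUnit_iff_isUnit_det _).mp hD)
  have h₂₁' : N.toBlocks₂₁ = -(M.toBlocks₂₂⁻¹ * M.toBlocks₂₁ * N.toBlocks₁₁) := by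
    rw [eq_neg_iff_add_eq_zero, Matrix.mul_assoc, ← Matrix.one_mul N.toBlocks₂₁, ← hD',
      Matrix.mul_assoc, ← Matrix.mul_add, add_comm, h₂₁, Matrix.mul_zero]
  refine inv_eq_left_inv ?_
  rw [← h₁₁, h₂₁']
  simp only [Matrix.add_mul, Matrix.neg_mul, Matrix.mul_neg, Matrix.mul_assoc, sub_eq_add_neg]

def IsZMatrix {R : Type*} [Zero R] [LE R] (A : Matrix n n R) : Prop :=
  ∀ i j, i ≠ j → A i j ≤ 0

theorem IsZMatrix.submatrix {R : Type*} [Zero R] [LE R] {A : Matrix n n R} (hA : A.IsZMatrix)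
    {f : m → n} (hf : Function.Injective f) : (A.submatrix f f).IsZMatrix :=
  fun _ _ hij => hA _ _ (hf.ne hij)

theorem IsZMatrix.dotProduct_mulVec_nonpos [Fintype n] {A : Matrix n n ℝ} (hA : A.IsZMatrix)
    {u v : n → ℝ} (hu : 0 ≤ u) (hv : 0 ≤ v) (huv : ∀ a, v a * u a = 0) :
    v ⬝ᵥ A *ᵥ u ≤ 0 := by
  simp only [dotProduct, mulVec, Finset.mul_sum]
  refine Finset.sum_nonpos fun a _ => Finset.sum_nonpos fun b _ => ?_
  obtain rfl | hab := eq_or_ne a b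
  · rw [mul_left_comm, huv, mul_zero]
  · exact mul_nonpos_of_nonneg_of_nonpos (hv a) (mul_nonpos_of_nonpos_of_nonneg (hA a b hab) (hu b))

/- The column `x` of `A⁻¹` solves `A x = e_l`; testing against `v = x⁻` gives
`vᵀ A v = vᵀ A x⁺ - v_l ≤ 0`, so `x⁻ = 0` by positive definiteness. -/
theorem IsZMatrix.inv_apply_nonneg [Fintype n] [DecidableEq n] {A : Matrix n n ℝ} (hA : A.IsZMatrix)
    (hpd : A.PosDef) (k l : n) : 0 ≤ A⁻¹ k l := by
  set x : n → ℝ := A⁻¹ *ᵥ Pi.single l 1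
  have hx : A *ᵥ x = Pi.single l 1 := by
    rw [mulVec_mulVec, mul_nonsing_inv _ ((isUnit_iff_isUnit_det _).mp hpd.isUnit), one_mulVec]
  have hdisj : ∀ a, x⁻ a * x⁺ a = 0 := fun a => by
    rcases le_total 0 (x a) with h | h
    · rw [Pi.negPart_apply, negPart_eq_zero.mpr h, zero_mul]
    · rw [Pi.posPart_apply, posPart_eq_zero.mpr h, mul_zero]
  have hx_nonneg : 0 ≤ x := by
    refine negPart_eq_zero.mp ?_
    by_contra hne
    have hpos := hpd.dotProduct_mulVec_pos hne
    rw [star_trivial] at hpos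
    have hsplit : x⁻ ⬝ᵥ A *ᵥ x⁻ = x⁻ ⬝ᵥ A *ᵥ x⁺ - x⁻ l := by
      have hx' : x⁺ - x = x⁻ := by linear_combination posPart_sub_negPart x
      rw [← dotProduct_single_one (x⁻) l, ← hx, ← dotProduct_sub, ← mulVec_sub, hx']
    have := hA.dotProduct_mulVec_nonpos (posPart_nonneg x) (negPart_nonneg x) hdisj
    have hl : 0 ≤ x⁻ l := negPart_nonneg x l
    linarith
  simpa [x, mulVec_single] using hx_nonneg k

theorem IsZMatrix.inv_toBlocks₁₁_inv [Fintype m] [Fintype n] [DecidableEq m] [DecidableEq n]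
    {M : Matrix (m ⊕ n) (m ⊕ n) ℝ} (hZ : M.IsZMatrix) (hpd : M.PosDef) :
    (M⁻¹.toBlocks₁₁)⁻¹.IsZMatrix := by
  have hD : M.toBlocks₂₂.PosDef := hpd.submatrix Sum.inr_injective
  intro i j hij
  rw [Matrix.inv_toBlocks₁₁_inv hpd.isUnit hD.isUnit, sub_apply, sub_nonpos]
  have hschur : 0 ≤ (M.toBlocks₁₂ * M.toBlocks₂₂⁻¹ * M.toBlocks₂₁) i j := by
    simp only [mul_apply, Finset.sum_mul]
    refine Finset.sum_nonneg fun k _ => Finset.sum_nonneg fun l _ => ?_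
    exact mul_nonneg_of_nonpos_of_nonpos
      (mul_nonpos_of_nonpos_of_nonneg (hZ _ _ Sum.inl_ne_inr)
        ((hZ.submatrix Sum.inr_injective).inv_apply_nonneg hD l k))
      (hZ _ _ Sum.inr_ne_inl)
  exact (hZ _ _ (Sum.inl_injective.ne hij)).trans hschur

theorem IsZMatrix.inv_submatrix_inv [Fintype n] [DecidableEq n] {Θ : Matrix n n ℝ}
    (hZ : Θ.IsZMatrix) (hpd : Θ.PosDef) (s : Finset n) :
    (Θ⁻¹.submatrix (Subtype.val : s → n) Subtype.val)⁻¹.IsZMatrix := by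
  let e := Equiv.sumCompl (· ∈ s)
  have h := (hZ.submatrix e.injective).inv_toBlocks₁₁_inv (hpd.submatrix e.injective)
  rwa [inv_submatrix_equiv] at h

end Matrix

theorem stmt3_general {p : ℕ} (Θ : Matrix (Fin p) (Fin p) ℝ)
    (hpd : Θ.PosDef)
    (hM : ∀ i j : Fin p, i ≠ j → Θ i j ≤ 0)
    (Sg : Matrix (Fin p) (Fin p) ℝ) (hSg : Sg = Θ⁻¹) :
    ∀ (i j : Fin p), i ≠ j → ∀ S : Finset (Fin p), i ∉ S → j ∉ S →
      0 ≤ partialCorr Sg i j S := by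
  intro i j hij S _ _
  subst hSg
  refine div_nonneg (neg_nonneg.mpr ?_) (Real.sqrt_nonneg _)
  exact Matrix.IsZMatrix.inv_submatrix_inv hM hpd (insert i (insert j S))
    ⟨i, Finset.mem_insert_self i _⟩ ⟨j, Finset.mem_insert_of_mem (Finset.mem_insert_self j S)⟩
    (Subtype.coe_ne_coe.mp hij)

/-- A Gaussian distribution whose precision matrix `Θ` is a symmetric positive definite
M-matrix has all partial correlation coefficients nonnegative: `ρ_{ij|S} ≥ 0` for all
distinct `i, j` and all `S ⊆ [p] \ {i,j}`. -/
theorem stmt3 {p : ℕ} (Θ : Matrix (Fin p) (Fin p) ℝ)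
    (hpd : Θ.PosDef) (hsym : Θ.IsSymm)
    (hM : ∀ i j : Fin p, i ≠ j → Θ i j ≤ 0)
    (Sg : Matrix (Fin p) (Fin p) ℝ) (hSg : Sg = Θ⁻¹) :
    ∀ (i j : Fin p), i ≠ j → ∀ S : Finset (Fin p), i ∉ S → j ∉ S →
      0 ≤ partialCorr Sg i j S :=
  stmt3_general Θ hpd hM Sg hSg
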